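/- Let f ∈ ℝ, d ∈ ℝ^p, and let H be a p×p real symmetric positive DEFINITE matrix. For s > 0 define z(s) = f / √(1 + (π/8)·dᵀ·(s⁻¹·I + H)⁻¹·d). Then as s → ∞, σ(|z(s)|) converges to σ( |f| / √(1 + (π/8)·dᵀH⁻¹d) ), and this limit satisfies σ( |f| / √(1 + (π/8)·dᵀH⁻¹d) ) ≤ σ( |f| / √(1 + (π/8)·‖d‖²/λ_max(H)) ). (Limit σ₀² → ∞ in Proposition 2.5: the asymptotic confidence is bounded in terms of the largest eigenvalue λ_max(H) of the log-likelihood Hessian.) -/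

import Mathlib

/-! Matrix inversion is continuous at the invertible `H`, so the quadratic form in `z(s)` tends to
`dᵀH⁻¹d`. In the Loewner order `H⁻¹ ≥ λ_max(H)⁻¹ • 1`, so `dᵀH⁻¹d ≥ ‖d‖²/λ_max(H)`, and
`q ↦ σ(|f| / √(1 + (π/8) q))` is antitone on `q ≥ 0`. -/

open Matrix Filter

/-- The logistic (sigmoid) function. -/
noncomputable def sigmoid (t : ℝ) : ℝ := 1 / (1 + Real.exp (-t))

open Topology
open scoped MatrixOrder

lemma sigmoid_eq_real_sigmoid : sigmoid = Real.sigmoid := by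
  ext t
  rw [sigmoid, Real.sigmoid_def, one_div]

lemma antitoneOn_sigmoid_div_sqrt_one_add_mul {a c : ℝ} (ha : 0 ≤ a) (hc : 0 ≤ c) :
    AntitoneOn (fun q => sigmoid (a / √(1 + c * q))) (Set.Ici 0) := by
  intro q (hq : 0 ≤ q) r _ hqr
  rw [sigmoid_eq_real_sigmoid]
  refine Real.sigmoid_monotone (div_le_div_of_nonneg_left ha (by positivity) ?_)
  gcongr

lemma continuousAt_sigmoid_div_sqrt_one_add_mul (a : ℝ) {c q : ℝ} (h : 0 < 1 + c * q) :
    ContinuousAt (fun q => sigmoid (a / √(1 + c * q))) q := by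
  rw [sigmoid_eq_real_sigmoid]
  exact continuous_sigmoid.continuousAt.comp
    (continuousAt_const.div (by fun_prop) (Real.sqrt_ne_zero'.mpr h))

namespace Matrix

variable {n : Type*} [Fintype n] [DecidableEq n]

lemma tendsto_inv_smul_one_add_atTop {H : Matrix n n ℝ} (hH : H.det ≠ 0) :
    Tendsto (fun s : ℝ => (s⁻¹ • (1 : Matrix n n ℝ) + H)⁻¹) atTop (𝓝 H⁻¹) := by
  have hlim : Tendsto (fun s : ℝ => s⁻¹ • (1 : Matrix n n ℝ) + H) atTop (𝓝 H) := by
    simpa using ((tendsto_inv_atTop_zero (𝕜 := ℝ)).smul_const (1 : Matrix n n ℝ)).add_const H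
  refine (continuousAt_matrix_inv _ ?_).tendsto.comp hlim
  rw [Ring.inverse_eq_inv']
  exact continuousAt_inv₀ hH

-- The spectrum of `H⁻¹` consists of the inverses of the eigenvalues of `H`.
lemma PosDef.algebraMap_inv_iSup_eigenvalues_le_inv {H : Matrix n n ℝ} (hH : H.PosDef) :
    algebraMap ℝ (Matrix n n ℝ) (⨆ i, hH.1.eigenvalues i)⁻¹ ≤ H⁻¹ := by
  refine algebraMap_le_of_le_spectrum (fun x hx => ?_) hH.inv.1
  lift H to (Matrix n n ℝ)ˣ using hH.isUnit
  rw [← coe_units_inv, ← spectrum.inv₀_mem_iff, hH.1.spectrum_real_eq_range_eigenvalues] at hx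
  obtain ⟨i, hi⟩ := hx
  have hpos : 0 < x⁻¹ := hi ▸ hH.eigenvalues_pos i
  rw [← inv_inv x]
  exact inv_anti₀ hpos (hi ▸ le_ciSup (Set.finite_range _).bddAbove i)

lemma PosDef.dotProduct_div_iSup_eigenvalues_le {H : Matrix n n ℝ} (hH : H.PosDef) (d : n → ℝ) :
    (d ⬝ᵥ d) / (⨆ i, hH.1.eigenvalues i) ≤ d ⬝ᵥ (H⁻¹ *ᵥ d) := by
  have h := (le_iff.mp hH.algebraMap_inv_iSup_eigenvalues_le_inv).dotProduct_mulVec_nonneg d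
  simp only [star_trivial, sub_mulVec, dotProduct_sub, Algebra.algebraMap_eq_smul_one,
    smul_mulVec, one_mulVec, dotProduct_smul, smul_eq_mul] at h
  rw [div_eq_inv_mul]
  linarith

end Matrix

/-- Limit `σ₀² → ∞` in Proposition 2.5: as `s → ∞`, `σ(|z(s)|)` converges to
`σ(|f| / √(1 + (π/8)·dᵀH⁻¹d))`, which is bounded by
`σ(|f| / √(1 + (π/8)·‖d‖²/λ_max(H)))`. -/
theorem tendsto_confidence_priorVar_top {p : ℕ}
    (f : ℝ) (d : Fin p → ℝ)
    (H : Matrix (Fin p) (Fin p) ℝ) (hH : H.PosDef) :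
    Tendsto
      (fun s : ℝ =>
        sigmoid |f / Real.sqrt (1 + Real.pi / 8 *
          (d ⬝ᵥ ((s⁻¹ • (1 : Matrix (Fin p) (Fin p) ℝ) + H)⁻¹ *ᵥ d)))|)
      atTop
      (nhds (sigmoid (|f| /
        Real.sqrt (1 + Real.pi / 8 * (d ⬝ᵥ (H⁻¹ *ᵥ d)))))) ∧
    sigmoid (|f| / Real.sqrt (1 + Real.pi / 8 * (d ⬝ᵥ (H⁻¹ *ᵥ d)))) ≤
      sigmoid (|f| / Real.sqrt (1 + Real.pi / 8 *
        ((d ⬝ᵥ d) / ⨆ i, hH.1.eigenvalues i))) := by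
  have hq : 0 ≤ d ⬝ᵥ (H⁻¹ *ᵥ d) := by
    simpa using hH.inv.posSemidef.dotProduct_mulVec_nonneg d
  have hq_max : 0 ≤ (d ⬝ᵥ d) / ⨆ i, hH.1.eigenvalues i :=
    div_nonneg (dotProduct_self_star_nonneg d) (Real.iSup_nonneg fun i => (hH.eigenvalues_pos i).le)
  simp only [abs_div, abs_of_nonneg (Real.sqrt_nonneg _)]
  refine ⟨?_, ?_⟩
  · have hquad : Tendsto (fun s : ℝ => d ⬝ᵥ ((s⁻¹ • (1 : Matrix (Fin p) (Fin p) ℝ) + H)⁻¹ *ᵥ d))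
        atTop (𝓝 (d ⬝ᵥ (H⁻¹ *ᵥ d))) :=
      ((by fun_prop : Continuous fun M : Matrix (Fin p) (Fin p) ℝ => d ⬝ᵥ (M *ᵥ d)).tendsto _).comp
        (tendsto_inv_smul_one_add_atTop hH.det_pos.ne')
    exact (continuousAt_sigmoid_div_sqrt_one_add_mul |f| (by positivity)).tendsto.comp hquad
  · exact antitoneOn_sigmoid_div_sqrt_one_add_mul (abs_nonneg f) (by positivity) hq_max hq
      (hH.dotProduct_div_iSup_eigenvalues_le d)
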